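/- arXiv:2208.08692 — 2 statements merged into one kernel-verified Lean document; each statement's English description precedes it below -/
import Mathlib

section
/- If a chord diagram τ of order n satisfies n + 1 − F(τ) ≤ 2 (the associated hieroglyph is realizable on the torus), then τ contains none of the four forbidden diagrams (ababcdcd), (abcdabcd), (abacdcbd), (abcadbdc). -/
/-- Strict cyclic betweenness on the cyclic group with `m` elements (`ZMod m`, realized as
`Fin m` so that the group is empty when `m = 0`): `b` lies on the open cyclic arc
from `a` to `c`. -/
def cyclicSbtw {m : ℕ} (a b c : Fin m) : Prop :=
  0 < (b.val + (m - a.val)) % m ∧ (b.val + (m - a.val)) % m < (c.val + (m - a.val)) % m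

/-- A chord diagram of order `n`: a fixed-point-free involution `τ` of the cyclic group
with `2n` elements (`ZMod (2n)`, realized as `Fin (2n)`); its chords are the pairs
`{i, τ i}`. -/
structure ChordDiagram (n : ℕ) where
  τ : Equiv.Perm (Fin (2 * n))
  invol : ∀ i, τ (τ i) = i
  fpf : ∀ i, τ i ≠ i

namespace ChordDiagram

/-- The boundary permutation `φ(i) = τ(i) + 1`. -/
def boundary {n : ℕ} (D : ChordDiagram n) : Equiv.Perm (Fin (2 * n)) :=
  D.τ.trans (finRotate (2 * n))

/-- The number `F` of boundary components: the number of orbits of the boundary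
permutation, with the convention `F = 1` when `n = 0`. -/
noncomputable def F {n : ℕ} (D : ChordDiagram n) : ℕ :=
  if n = 0 then 1
  else Nat.card (Quotient (MulAction.orbitRel (Subgroup.zpowers D.boundary) (Fin (2 * n))))

/-- Build a chord diagram from an involutive, fixed-point-free function. -/
def ofInvol {n : ℕ} (f : Fin (2 * n) → Fin (2 * n)) (h : Function.Involutive f)
    (hf : ∀ i, f i ≠ i) : ChordDiagram n :=
  ⟨Function.Involutive.toPerm f h, h, hf⟩

/-- The empty chord diagram (order 0). -/
def emptyDiagram : ChordDiagram 0 := ⟨1, fun i => i.elim0, fun i => i.elim0⟩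

/-- The chord diagram `(abab)`: chords `{0,2}, {1,3}` on `ZMod 4`. -/
def abab : ChordDiagram 2 := ofInvol ![2, 3, 0, 1] (by intro x; fin_cases x <;> rfl) (by decide)

/-- The chord diagram `(abcabc)`: chords `{0,3}, {1,4}, {2,5}` on `ZMod 6`. -/
def abcabc : ChordDiagram 3 :=
  ofInvol ![3, 4, 5, 0, 1, 2] (by intro x; fin_cases x <;> rfl) (by decide)

/-- The forbidden diagram `(ababcdcd)`: chords `{0,2},{1,3},{4,6},{5,7}` on `ZMod 8`. -/
def ababcdcd : ChordDiagram 4 :=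
  ofInvol ![2, 3, 0, 1, 6, 7, 4, 5] (by intro x; fin_cases x <;> rfl) (by decide)

/-- The forbidden diagram `(abcdabcd)`: chords `{0,4},{1,5},{2,6},{3,7}` on `ZMod 8`. -/
def abcdabcd : ChordDiagram 4 :=
  ofInvol ![4, 5, 6, 7, 0, 1, 2, 3] (by intro x; fin_cases x <;> rfl) (by decide)

/-- The forbidden diagram `(abacdcbd)`: chords `{0,2},{1,6},{3,5},{4,7}` on `ZMod 8`. -/
def abacdcbd : ChordDiagram 4 :=
  ofInvol ![2, 6, 0, 5, 7, 3, 1, 4] (by intro x; fin_cases x <;> rfl) (by decide)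

/-- The forbidden diagram `(abcadbdc)`: chords `{0,3},{1,5},{2,7},{4,6}` on `ZMod 8`. -/
def abcadbdc : ChordDiagram 4 :=
  ofInvol ![3, 5, 7, 0, 6, 1, 4, 2] (by intro x; fin_cases x <;> rfl) (by decide)

/-- The chords `{i, τ i}` and `{j, τ j}` interlace: exactly one of `j, τ j` lies on
the open cyclic arc from `i` to `τ i`. -/
def Interlaces {n : ℕ} (D : ChordDiagram n) (i j : Fin (2 * n)) : Prop :=
  Xor' (cyclicSbtw i j (D.τ i)) (cyclicSbtw i (D.τ j) (D.τ i))

/-- The type of chords of a chord diagram. -/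
def Chord {n : ℕ} (D : ChordDiagram n) : Type :=
  {p : Sym2 (Fin (2 * n)) // ∃ i, p = s(i, D.τ i)}

/-- The interlacement graph (graph of loops) of a chord diagram: vertices are the chords,
edges are the interlacing pairs of distinct chords. -/
def interGraph {n : ℕ} (D : ChordDiagram n) : SimpleGraph D.Chord where
  Adj c d := c ≠ d ∧
    ((∃ i j, c.1 = s(i, D.τ i) ∧ d.1 = s(j, D.τ j) ∧ D.Interlaces i j) ∨
     (∃ i j, d.1 = s(i, D.τ i) ∧ c.1 = s(j, D.τ j) ∧ D.Interlaces i j))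
  symm := by
    refine ⟨fun c d h => ?_⟩
    exact ⟨h.1.symm, h.2.symm⟩
  loopless := by
    refine ⟨fun c h => ?_⟩
    exact h.1 rfl

/-- A cyclic-order-preserving injection between cyclic groups. -/
def CycEmb {k m : ℕ} (f : Fin k → Fin m) : Prop :=
  Function.Injective f ∧ ∀ a b c, cyclicSbtw a b c → cyclicSbtw (f a) (f b) (f c)

/-- `D` contains the diagram `P`: the sub-diagram of `D` induced by some set of its chords
equals `P` up to rotation, i.e. there is a cyclic-order-preserving injection
`f : ZMod (2k) → ZMod (2n)` intertwining the involutions. -/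
def Contains {n k : ℕ} (D : ChordDiagram n) (P : ChordDiagram k) : Prop :=
  ∃ f : Fin (2 * k) → Fin (2 * n), CycEmb f ∧ ∀ i, D.τ (f i) = f (P.τ i)

/-- `D'` is obtained from `D` by deleting the chord `{j, τ j}` and renumbering the
remaining `2n` endpoints by the cyclic-order-preserving bijection onto `ZMod (2n)`. -/
def DeleteChord {n : ℕ} (D : ChordDiagram (n + 1)) (j : Fin (2 * (n + 1)))
    (D' : ChordDiagram n) : Prop :=
  ∃ f : Fin (2 * n) → Fin (2 * (n + 1)), CycEmb f ∧
    Set.range f = ({j, D.τ j} : Set (Fin (2 * (n + 1))))ᶜ ∧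
    ∀ i, D.τ (f i) = f (D'.τ i)

/-- Reduction operation (α): deletion of an isolated chord `{i, i+1}` (where `τ i = i + 1`). -/
def StepAlpha {n : ℕ} (D : ChordDiagram (n + 1)) (D' : ChordDiagram n) : Prop :=
  ∃ i, D.τ i = finRotate (2 * (n + 1)) i ∧ DeleteChord D i D'

/-- Reduction operation (β): deletion of the chord `{i+1, τ(i+1)}` from a parallel pair,
i.e. `τ(i+1) = τ(i) - 1` with the chords `{i, τ i}` and `{i+1, τ(i+1)}` distinct. -/
def StepBeta {n : ℕ} (D : ChordDiagram (n + 1)) (D' : ChordDiagram n) : Prop :=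
  ∃ i, D.τ (finRotate (2 * (n + 1)) i) = (finRotate (2 * (n + 1))).symm (D.τ i) ∧
    D.τ i ≠ finRotate (2 * (n + 1)) i ∧
    DeleteChord D (finRotate (2 * (n + 1)) i) D'

/-- One reduction step (operation (α) or (β)) between chord diagrams. -/
def Step (p q : Σ n, ChordDiagram n) : Prop :=
  ∃ h : p.1 = q.1 + 1,
    StepAlpha (cast (congrArg ChordDiagram h) p.2) q.2 ∨
    StepBeta (cast (congrArg ChordDiagram h) p.2) q.2

/-- `p` reduces to `q` by finitely many operations (α), (β) (possibly none). -/
def Reduces (p q : Σ n, ChordDiagram n) : Prop := Relation.ReflTransGen Step p q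

/-- `D` reduces to one of the diagrams `()`, `(abab)`, `(abcabc)`. -/
def ReducesToBasic {n : ℕ} (D : ChordDiagram n) : Prop :=
  Reduces ⟨n, D⟩ ⟨0, emptyDiagram⟩ ∨ Reduces ⟨n, D⟩ ⟨2, abab⟩ ∨ Reduces ⟨n, D⟩ ⟨3, abcabc⟩

end ChordDiagram

/-- A simple graph is a disjoint union of a (possibly empty) set of isolated vertices and a
complete bipartite or complete tripartite graph: there are three pairwise disjoint sets
`A`, `B`, `C` of vertices (a part may be empty; `C = ∅` gives the complete bipartite case)
such that two vertices are adjacent iff they lie in two different ones of these parts;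
all remaining vertices are isolated. -/
def IsIsolatedPlusCompleteMultipartite {V : Type*} (G : SimpleGraph V) : Prop :=
  ∃ A B C : Set V, Disjoint A B ∧ Disjoint A C ∧ Disjoint B C ∧
    ∀ v w, G.Adj v w ↔
      ((v ∈ A ∧ w ∈ B) ∨ (v ∈ B ∧ w ∈ A) ∨ (v ∈ A ∧ w ∈ C) ∨ (v ∈ C ∧ w ∈ A) ∨
       (v ∈ B ∧ w ∈ C) ∨ (v ∈ C ∧ w ∈ B))

/-!
Work over `𝔽₂` with the interlacement matrix `M` of `D`, rows and columns indexed by the chords.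
Functions constant on the boundary components form a space of dimension at least `F`. The map
`v ↦ (v i + v (τ i))`, over the chords `{i, τ i}`, sends this space into `ker M`, because around
each chord the sum telescopes, and its kernel consists of constants; hence
`F ≤ 1 + dim ker M = n + 1 - rank M`. If `D` contains `P`, the interlacement matrix of `P` is a
principal submatrix of that of `D`, and each forbidden diagram has an invertible `4 × 4`
interlacement matrix, so `n + 1 - F ≥ 4`.
-/

section CyclicOrder

variable {m : ℕ}

instance (a b c : Fin m) : Decidable (cyclicSbtw a b c) :=
  inferInstanceAs (Decidable (_ ∧ _))

theorem Fin.val_sub_eq_ite (a b : Fin m) :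
    (a - b).val = if b ≤ a then a.val - b.val else m + a.val - b.val := by
  split_ifs with h
  · exact Fin.sub_val_of_le h
  · exact Fin.coe_sub_iff_lt.mpr (not_le.mp h)

theorem cyclicSbtw_iff_val_sub {a b c : Fin m} :
    cyclicSbtw a b c ↔ 0 < (b - a).val ∧ (b - a).val < (c - a).val := by
  simp only [cyclicSbtw, Fin.sub_def, Nat.add_comm]

theorem not_cyclicSbtw_self_left (a c : Fin m) : ¬ cyclicSbtw a a c := by
  simp only [cyclicSbtw_iff_val_sub, Fin.val_sub_eq_ite, le_refl, if_true]
  omega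

theorem not_cyclicSbtw_self_right (a b : Fin m) : ¬ cyclicSbtw a b b := by
  simp [cyclicSbtw_iff_val_sub]

theorem cyclicSbtw.not_swap {a b c : Fin m} (h : cyclicSbtw a b c) : ¬ cyclicSbtw a c b := by
  rw [cyclicSbtw_iff_val_sub] at *
  omega

theorem cyclicSbtw_or_cyclicSbtw_swap {a b c : Fin m} (hba : b ≠ a) (hca : c ≠ a) (hbc : b ≠ c) :
    cyclicSbtw a b c ∨ cyclicSbtw a c b := by
  rw [Ne, Fin.ext_iff] at hba hca hbc
  simp only [cyclicSbtw_iff_val_sub, Fin.val_sub_eq_ite, Fin.le_def]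
  split_ifs <;> omega

theorem cyclicSbtw_swap_ends_iff {a b z : Fin m} (hza : z ≠ a) (hzb : z ≠ b) (hab : a ≠ b) :
    cyclicSbtw b z a ↔ ¬ cyclicSbtw a z b := by
  rw [Ne, Fin.ext_iff] at hza hzb hab
  simp only [cyclicSbtw_iff_val_sub, Fin.val_sub_eq_ite, Fin.le_def]
  have := a.is_lt; have := b.is_lt; have := z.is_lt
  split_ifs <;> omega

open Fin.NatCast in
theorem Fin.sum_cyclicSbtw_sub [NeZero m] {G : Type*} [AddCommGroup G] (v : Fin m → G)
    {a b : Fin m} (hab : a ≠ b) :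
    ∑ y with cyclicSbtw a y b, (v (y + 1) - v y) = v b - v (a + 1) := by
  set j := (b - a).val with hj
  have hj0 : j ≠ 0 := fun h => hab (sub_eq_zero.mp (Fin.ext h)).symm
  have hjm : j < m := (b - a).is_lt
  let f : ℕ → G := fun k => v (a + ((k + 1 : ℕ) : Fin m))
  have hreindex : ∑ y with cyclicSbtw a y b, (v (y + 1) - v y) =
      ∑ k ∈ Finset.range (j - 1), (f (k + 1) - f k) := by
    refine (Finset.sum_nbij' (fun k => a + ((k + 1 : ℕ) : Fin m)) (fun y => (y - a).val - 1)
      ?_ ?_ ?_ ?_ ?_).symm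
    · intro k hk
      simp only [Finset.mem_range] at hk
      simp only [Finset.mem_filter, Finset.mem_univ, true_and, cyclicSbtw_iff_val_sub,
        add_sub_cancel_left, Fin.val_cast_of_lt (by omega : k + 1 < m)]
      omega
    · intro y hy
      simp only [Finset.mem_filter, Finset.mem_univ, true_and, cyclicSbtw_iff_val_sub] at hy
      simp only [Finset.mem_range]
      omega
    · intro k hk
      simp only [Finset.mem_range] at hk
      simp only [add_sub_cancel_left, Fin.val_cast_of_lt (by omega : k + 1 < m)]
      omega
    · intro y hy
      simp only [Finset.mem_filter, Finset.mem_univ, true_and, cyclicSbtw_iff_val_sub] at hy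
      simp only [Nat.sub_add_cancel (Nat.one_le_iff_ne_zero.mpr hy.1.ne'), Fin.cast_val_eq_self,
        add_sub_cancel]
    · intro k _
      simp only [f, Nat.cast_succ, add_assoc]
  rw [hreindex, Finset.sum_range_sub]
  simp only [f, zero_add, Nat.cast_one, Nat.sub_add_cancel (Nat.one_le_iff_ne_zero.mpr hj0)]
  rw [hj, Fin.cast_val_eq_self, add_sub_cancel]

open Fin.NatCast in
theorem Fin.apply_eq_apply_of_forall_add_one [NeZero m] {β : Type*} {v : Fin m → β}
    (h : ∀ x, v (x + 1) = v x) (x y : Fin m) : v x = v y := by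
  have key : ∀ k : ℕ, v (x + k) = v x := by
    intro k
    induction k with
    | zero => simp
    | succ k ih => rw [Nat.cast_succ, ← add_assoc, h, ih]
  simpa using (key (y - x).val).symm

end CyclicOrder

theorem Function.Involutive.sum_eq_sum_subtype_lt {α β : Type*} [Fintype α] [LinearOrder α]
    [AddCommMonoid β] {σ : α → α} (hσ : Function.Involutive σ) (hfix : ∀ x, σ x ≠ x)
    (g : α → β) :
    ∑ x, g x = ∑ x : {x // x < σ x}, (g x + g (σ x)) := by
  rw [← Finset.sum_subtype (Finset.univ.filter (fun x => x < σ x)) (by simp)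
    (fun x => g x + g (σ x)), Finset.sum_add_distrib,
    ← Finset.sum_filter_add_sum_filter_not Finset.univ (fun x => x < σ x) g]
  congr 1
  refine Finset.sum_nbij' σ σ ?_ ?_ (fun x _ => hσ x) (fun x _ => hσ x)
    (fun x _ => (congrArg g (hσ x)).symm) <;>
    intro x hx <;> simp only [Finset.mem_filter, Finset.mem_univ, true_and, hσ x] at hx ⊢
  · exact lt_of_le_of_ne (not_lt.mp hx) (hfix x)
  · exact not_lt.mpr hx.le

theorem Equiv.Perm.card_orbitRel_quotient_le_finrank {α : Type*} [Finite α] (K : Type*) [Field K]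
    (σ : Equiv.Perm α) :
    Nat.card (Quotient (MulAction.orbitRel (Subgroup.zpowers σ) α)) ≤
      Module.finrank K (LinearMap.eqLocus (LinearMap.funLeft K K σ) LinearMap.id) := by
  set Q := Quotient (MulAction.orbitRel (Subgroup.zpowers σ) α)
  have : Fintype Q := Fintype.ofFinite Q
  let π : (Q → K) →ₗ[K] (α → K) := LinearMap.funLeft K K Quotient.mk''
  have hπ : ∀ w, π w ∈ LinearMap.eqLocus (LinearMap.funLeft K K σ) LinearMap.id :=
    fun w => funext fun x => congrArg w (Quotient.sound ⟨⟨σ, Subgroup.mem_zpowers σ⟩, rfl⟩)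
  have hinj : Function.Injective (π.codRestrict _ hπ) :=
    (LinearMap.injective_codRestrict_iff hπ).mpr
      (LinearMap.funLeft_injective_of_surjective _ _ _ Quotient.mk''_surjective)
  simpa [Nat.card_eq_fintype_card] using LinearMap.finrank_le_finrank_of_injective hinj

namespace ChordDiagram

open Matrix

variable {n : ℕ} (D : ChordDiagram n)

theorem CycEmb.cyclicSbtw_iff {k m : ℕ} {f : Fin k → Fin m} (hf : CycEmb f) {a b c : Fin k}
    (hba : b ≠ a) (hca : c ≠ a) (hbc : b ≠ c) :
    cyclicSbtw (f a) (f b) (f c) ↔ cyclicSbtw a b c := by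
  refine ⟨fun h => ?_, hf.2 a b c⟩
  exact (cyclicSbtw_or_cyclicSbtw_swap hba hca hbc).resolve_right
    fun h' => (hf.2 a c b h').not_swap h

theorem interlaces_iff (x y : Fin (2 * n)) :
    D.Interlaces x y ↔ Xor (cyclicSbtw x y (D.τ x)) (cyclicSbtw x (D.τ y) (D.τ x)) :=
  Iff.rfl

instance (x y : Fin (2 * n)) : Decidable (D.Interlaces x y) :=
  decidable_of_iff _ (D.interlaces_iff x y).symm

theorem not_interlaces_self (x : Fin (2 * n)) : ¬ D.Interlaces x x := by
  simp [interlaces_iff, Xor, not_cyclicSbtw_self_left, not_cyclicSbtw_self_right]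

theorem not_interlaces_τ (x : Fin (2 * n)) : ¬ D.Interlaces x (D.τ x) := by
  simp [interlaces_iff, Xor, D.invol, not_cyclicSbtw_self_left, not_cyclicSbtw_self_right]

theorem interlaces_τ_right (x y : Fin (2 * n)) : D.Interlaces x (D.τ y) ↔ D.Interlaces x y := by
  rw [interlaces_iff, interlaces_iff, D.invol, xor_comm]

theorem interlaces_τ_left (x y : Fin (2 * n)) : D.Interlaces (D.τ x) y ↔ D.Interlaces x y := by
  by_cases hyx : y = x
  · subst hyx
    simp only [← D.interlaces_τ_right (D.τ y) y, D.not_interlaces_self]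
  by_cases hyτx : y = D.τ x
  · subst hyτx
    simp only [D.not_interlaces_self, D.not_interlaces_τ]
  have hτyx : D.τ y ≠ x := fun h => hyτx (by rw [← h, D.invol])
  have hτyτx : D.τ y ≠ D.τ x := fun h => hyx (D.τ.injective h)
  have hxτx : x ≠ D.τ x := (D.fpf x).symm
  rw [interlaces_iff, interlaces_iff, D.invol, cyclicSbtw_swap_ends_iff hyx hyτx hxτx,
    cyclicSbtw_swap_ends_iff hτyx hτyτx hxτx, xor_not_not]

theorem interlaces_map_iff {k : ℕ} {P : ChordDiagram k} {f : Fin (2 * k) → Fin (2 * n)}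
    (hf : CycEmb f) (hτ : ∀ i, D.τ (f i) = f (P.τ i)) (x y : Fin (2 * k)) :
    D.Interlaces (f x) (f y) ↔ P.Interlaces x y := by
  by_cases hyx : y = x
  · subst hyx
    simp only [D.not_interlaces_self, P.not_interlaces_self]
  by_cases hyτx : y = P.τ x
  · subst hyτx
    simp only [← hτ, D.not_interlaces_τ, P.not_interlaces_τ]
  have hτyx : P.τ y ≠ x := fun h => hyτx (by rw [← h, P.invol])
  have hτyτx : P.τ y ≠ P.τ x := fun h => hyx (P.τ.injective h)
  rw [interlaces_iff, interlaces_iff, hτ, hτ, hf.cyclicSbtw_iff hyx (P.fpf x) hyτx,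
    hf.cyclicSbtw_iff hτyx (P.fpf x) hτyτx]

/-- The chords of `D`, each indexed by its smaller endpoint. -/
abbrev LeftEnd : Type := {x : Fin (2 * n) // x < D.τ x}

def leftEnd (x : Fin (2 * n)) : D.LeftEnd :=
  if h : x < D.τ x then ⟨x, h⟩
  else ⟨D.τ x, by rw [D.invol]; exact lt_of_le_of_ne (not_lt.mp h) (D.fpf x)⟩

theorem interlaces_leftEnd_iff (x y : Fin (2 * n)) :
    D.Interlaces (D.leftEnd x) (D.leftEnd y) ↔ D.Interlaces x y := by
  unfold leftEnd
  split_ifs <;> simp only [interlaces_τ_left, interlaces_τ_right]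

def interMatrix : Matrix D.LeftEnd D.LeftEnd (ZMod 2) :=
  fun r s => if D.Interlaces r s then 1 else 0

variable {D} in
theorem Contains.rank_interMatrix_le {k : ℕ} {P : ChordDiagram k} (h : D.Contains P) :
    P.interMatrix.rank ≤ D.interMatrix.rank := by
  obtain ⟨f, hf, hτ⟩ := h
  let g : P.LeftEnd → D.LeftEnd := fun r => D.leftEnd (f r)
  have hsub : D.interMatrix.submatrix g g = P.interMatrix := by
    ext r s
    simp only [submatrix_apply, interMatrix, g, interlaces_leftEnd_iff,
      D.interlaces_map_iff hf hτ]
  exact hsub ▸ rank_submatrix_le _ _ _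

theorem card_leftEnd : Fintype.card D.LeftEnd = n := by
  have h := Function.Involutive.sum_eq_sum_subtype_lt D.invol D.fpf (fun _ => 1)
  simp only [Finset.sum_const, Finset.card_univ, Fintype.card_fin, smul_eq_mul, mul_one] at h
  have : Fintype.card D.LeftEnd = Fintype.card {x // x < D.τ x} := Fintype.card_congr (.refl _)
  omega

theorem boundary_τ (x : Fin (2 * n)) : D.boundary (D.τ x) = finRotate _ x := by
  simp [boundary, D.invol]

abbrev boundaryInvariants : Submodule (ZMod 2) (Fin (2 * n) → ZMod 2) :=
  LinearMap.eqLocus (LinearMap.funLeft _ _ D.boundary) LinearMap.id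

theorem apply_add_one_of_mem_boundaryInvariants [NeZero (2 * n)] {v : Fin (2 * n) → ZMod 2}
    (hv : v ∈ D.boundaryInvariants) (x : Fin (2 * n)) : v (x + 1) = v (D.τ x) := by
  rw [← finRotate_apply, ← boundary_τ]
  exact congrFun hv (D.τ x)

def endpointSum : (Fin (2 * n) → ZMod 2) →ₗ[ZMod 2] (D.LeftEnd → ZMod 2) :=
  LinearMap.funLeft _ _ Subtype.val + LinearMap.funLeft _ _ (fun r : D.LeftEnd => D.τ r)

theorem endpointSum_apply (v : Fin (2 * n) → ZMod 2) (r : D.LeftEnd) :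
    D.endpointSum v r = v r + v (D.τ r) :=
  rfl

theorem endpointSum_leftEnd (v : Fin (2 * n) → ZMod 2) (x : Fin (2 * n)) :
    D.endpointSum v (D.leftEnd x) = v x + v (D.τ x) := by
  unfold leftEnd
  split_ifs
  · rfl
  · rw [endpointSum_apply, D.invol, add_comm]

theorem endpointSum_mem_ker [NeZero (2 * n)] {v : Fin (2 * n) → ZMod 2}
    (hv : v ∈ D.boundaryInvariants) : D.interMatrix *ᵥ D.endpointSum v = 0 := by
  funext r
  -- Around the arc from `r` to `τ r` the sum telescopes to `0`; grouped by chords, a chord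
  -- contributes exactly when one of its endpoints lies on the arc, i.e. when it interlaces `r`.
  have harc : ∑ y with cyclicSbtw r.1 y (D.τ r), (v (D.τ y) + v y) = 0 := by
    have := Fin.sum_cyclicSbtw_sub v (D.fpf r).symm
    simpa only [CharTwo.sub_eq_add, D.apply_add_one_of_mem_boundaryInvariants hv,
      CharTwo.add_self_eq_zero] using this
  rw [Finset.sum_filter, Function.Involutive.sum_eq_sum_subtype_lt D.invol D.fpf] at harc
  rw [Pi.zero_apply, ← harc, mulVec, dotProduct]
  refine Finset.sum_congr rfl fun s _ => ?_
  simp only [interMatrix, interlaces_iff, endpointSum_apply, D.invol]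
  by_cases hp : cyclicSbtw r.1 s (D.τ r) <;> by_cases hq : cyclicSbtw r.1 (D.τ s) (D.τ r) <;>
    simp [Xor, hp, hq, CharTwo.add_self_eq_zero, add_comm]

theorem finrank_boundaryInvariants_le [NeZero (2 * n)] :
    Module.finrank (ZMod 2) D.boundaryInvariants ≤
      Module.finrank (ZMod 2) (LinearMap.ker D.interMatrix.mulVecLin) + 1 := by
  let δ := D.endpointSum.domRestrict D.boundaryInvariants
  have hrange : LinearMap.range δ ≤ LinearMap.ker D.interMatrix.mulVecLin := by
    rintro _ ⟨v, rfl⟩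
    exact D.endpointSum_mem_ker v.2
  let ev : LinearMap.ker δ →ₗ[ZMod 2] ZMod 2 :=
    (LinearMap.proj 0).comp (D.boundaryInvariants.subtype.comp (LinearMap.ker δ).subtype)
  have hev : Function.Injective ev := by
    rw [injective_iff_map_eq_zero]
    rintro ⟨⟨v, hv⟩, hδv⟩ hv0
    have hτ : ∀ x, v (D.τ x) = v x := fun x => by
      have h := congrFun (LinearMap.mem_ker.mp hδv) (D.leftEnd x)
      rw [LinearMap.domRestrict_apply, endpointSum_leftEnd, Pi.zero_apply,
        add_eq_zero_iff_eq_neg, CharTwo.neg_eq] at h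
      exact h.symm
    have hconst := Fin.apply_eq_apply_of_forall_add_one
      fun x => (D.apply_add_one_of_mem_boundaryInvariants hv x).trans (hτ x)
    ext x
    exact (hconst x 0).trans hv0
  have hker := LinearMap.finrank_le_finrank_of_injective hev
  have hrn := LinearMap.finrank_range_add_finrank_ker δ
  have := Submodule.finrank_mono hrange
  rw [Module.finrank_self] at hker
  omega

theorem F_add_rank_interMatrix_le : D.F + D.interMatrix.rank ≤ n + 1 := by
  rcases Nat.eq_zero_or_pos n with rfl | hn
  · have := D.interMatrix.rank_le_card_width
    rw [card_leftEnd] at this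
    simp only [F, if_true]
    omega
  have : NeZero (2 * n) := ⟨by omega⟩
  have hF : Nat.card (Quotient (MulAction.orbitRel (Subgroup.zpowers D.boundary) _)) ≤
      Module.finrank (ZMod 2) D.boundaryInvariants :=
    Equiv.Perm.card_orbitRel_quotient_le_finrank (ZMod 2) D.boundary
  have hinv := D.finrank_boundaryInvariants_le
  have hrn := LinearMap.finrank_range_add_finrank_ker D.interMatrix.mulVecLin
  rw [Module.finrank_fintype_fun_eq_card, card_leftEnd] at hrn
  rw [F, if_neg hn.ne', rank]
  omega

theorem rank_interMatrix_of_mulVec_eq_zero (h : ∀ v, D.interMatrix *ᵥ v = 0 → v = 0) :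
    D.interMatrix.rank = n := by
  rw [rank_of_isUnit _ (mulVec_injective_iff_isUnit.mp
    ((injective_iff_map_eq_zero D.interMatrix.mulVecLin).mpr h)), card_leftEnd]

theorem rank_interMatrix_ababcdcd : ababcdcd.interMatrix.rank = 4 :=
  rank_interMatrix_of_mulVec_eq_zero _ (by decide)

theorem rank_interMatrix_abcdabcd : abcdabcd.interMatrix.rank = 4 :=
  rank_interMatrix_of_mulVec_eq_zero _ (by decide)

theorem rank_interMatrix_abacdcbd : abacdcbd.interMatrix.rank = 4 :=
  rank_interMatrix_of_mulVec_eq_zero _ (by decide)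

theorem rank_interMatrix_abcadbdc : abcadbdc.interMatrix.rank = 4 :=
  rank_interMatrix_of_mulVec_eq_zero _ (by decide)

end ChordDiagram

/-- **(A ⇒ B).** If a chord diagram `D` of order `n` satisfies `n + 1 - F(D) ≤ 2` (i.e. the
associated hieroglyph is realizable on the torus), then `D` contains none of the four
forbidden diagrams `(ababcdcd)`, `(abcdabcd)`, `(abacdcbd)`, `(abcadbdc)`. -/
theorem torus_realizable_no_forbidden (n : ℕ) (D : ChordDiagram n)
    (hA : (n : ℤ) + 1 - (D.F : ℤ) ≤ 2) :
    ¬ D.Contains ChordDiagram.ababcdcd ∧ ¬ D.Contains ChordDiagram.abcdabcd ∧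
      ¬ D.Contains ChordDiagram.abacdcbd ∧ ¬ D.Contains ChordDiagram.abcadbdc := by
  have not_contains (P : ChordDiagram 4) (hP : P.interMatrix.rank = 4) : ¬ D.Contains P :=
    fun hDP => by
      have := hDP.rank_interMatrix_le
      have := D.F_add_rank_interMatrix_le
      omega
  exact ⟨not_contains _ ChordDiagram.rank_interMatrix_ababcdcd,
    not_contains _ ChordDiagram.rank_interMatrix_abcdabcd,
    not_contains _ ChordDiagram.rank_interMatrix_abacdcbd,
    not_contains _ ChordDiagram.rank_interMatrix_abcadbdc⟩
end

section
/- Let G be a finite simple graph that contains none of 2K2 (two disjoint edges), K4, P4 (the path on four vertices), and the paw as subgraphs. Then G is a disjoint union of a (possibly empty) set of isolated vertices and a complete bipartite or complete tripartite graph (in fact, of a star K_{1,m} or a triangle K_{1,1,1}). -/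
/-!
If `G` has an edge `xy`, either `x` and `y` have a common neighbour `z` or not. In the first
case every other edge would form a paw with the triangle `xyz` (if it meets it) or a `2K2`
with `xy` (if it does not), so `G` is the triangle plus isolated vertices. In the second case,
if neither `x` nor `y` were on every edge, `2K2`-freeness would give neighbours `t ≠ y` of `x`
and `u ≠ x` of `y`; these are distinct as `xy` lies in no triangle, so `t x y u` is a `P₄`.
Hence `G` is a star plus isolated vertices.
-/

/-- `G` contains `H` as a subgraph: there is an injective map of vertices sending
edges to edges. -/
def GraphContains {V W : Type*} (G : SimpleGraph V) (H : SimpleGraph W) : Prop :=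
  ∃ f : W → V, Function.Injective f ∧ ∀ a b, H.Adj a b → G.Adj (f a) (f b)

/-- `2K2`: two disjoint edges, on the vertices `0, 1, 2, 3` with edges `01`, `23`. -/
def twoK2 : SimpleGraph (Fin 4) :=
  SimpleGraph.fromRel (fun a b => (a = 0 ∧ b = 1) ∨ (a = 2 ∧ b = 3))

/-- The paw: the graph on vertices `a = 0, b = 1, c = 2, d = 3` with edges
`ab, ac, bc, bd` (a triangle with one pendant edge). -/
def pawGraph : SimpleGraph (Fin 4) :=
  SimpleGraph.fromRel (fun a b =>
    (a = 0 ∧ b = 1) ∨ (a = 0 ∧ b = 2) ∨ (a = 1 ∧ b = 2) ∨ (a = 1 ∧ b = 3))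

section FourVertexSubgraphs

variable {V : Type*} {G : SimpleGraph V} {a b c d : V}

lemma injective_vecCons_four (hab : a ≠ b) (hac : a ≠ c) (had : a ≠ d) (hbc : b ≠ c)
    (hbd : b ≠ d) (hcd : c ≠ d) : Function.Injective ![a, b, c, d] := by
  intro i j hij
  fin_cases i <;> fin_cases j <;> simp_all

lemma graphContains_twoK2 (hab : G.Adj a b) (hcd : G.Adj c d)
    (hac : a ≠ c) (had : a ≠ d) (hbc : b ≠ c) (hbd : b ≠ d) :
    GraphContains G twoK2 := by
  refine ⟨![a, b, c, d], injective_vecCons_four hab.ne hac had hbc hbd hcd.ne, ?_⟩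
  intro i j hij
  fin_cases i <;> fin_cases j <;> simp [twoK2] at hij <;>
    first | exact hab | exact hab.symm | exact hcd | exact hcd.symm

lemma graphContains_pawGraph (hab : G.Adj a b) (hac : G.Adj a c) (hbc : G.Adj b c)
    (hbd : G.Adj b d) (had : a ≠ d) (hcd : c ≠ d) :
    GraphContains G pawGraph := by
  refine ⟨![a, b, c, d], injective_vecCons_four hab.ne hac.ne had hbc.ne hbd.ne hcd, ?_⟩
  intro i j hij
  fin_cases i <;> fin_cases j <;> simp [pawGraph] at hij <;>
    first | exact hab | exact hab.symm | exact hac | exact hac.symm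
          | exact hbc | exact hbc.symm | exact hbd | exact hbd.symm

lemma graphContains_pathGraph_four (hab : G.Adj a b) (hbc : G.Adj b c) (hcd : G.Adj c d)
    (hac : a ≠ c) (had : a ≠ d) (hbd : b ≠ d) :
    GraphContains G (SimpleGraph.pathGraph 4) := by
  refine ⟨![a, b, c, d], injective_vecCons_four hab.ne hac had hbc.ne hbd hcd.ne, ?_⟩
  intro i j hij
  rw [SimpleGraph.pathGraph_adj] at hij
  fin_cases i <;> fin_cases j <;> simp at hij ⊢ <;>
    first | exact hab | exact hab.symm | exact hbc | exact hbc.symm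
          | exact hcd | exact hcd.symm

end FourVertexSubgraphs

section Structure

variable {V : Type*} {G : SimpleGraph V}

lemma isIsolatedPlusCompleteMultipartite_of_forall_not_adj (h : ∀ v w, ¬ G.Adj v w) :
    IsIsolatedPlusCompleteMultipartite G :=
  ⟨∅, ∅, ∅, by simp, by simp, by simp, by simpa using h⟩

lemma isIsolatedPlusCompleteMultipartite_of_forall_adj_eq_or_eq (c : V)
    (hc : ∀ v w, G.Adj v w → v = c ∨ w = c) :
    IsIsolatedPlusCompleteMultipartite G := by
  refine ⟨{c}, G.neighborSet c, ∅, ?_, by simp, by simp, fun v w => ?_⟩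
  · simp
  simp only [Set.mem_singleton_iff, SimpleGraph.mem_neighborSet, Set.mem_empty_iff_false,
    and_false, false_and, or_false]
  constructor
  · intro hvw
    rcases hc v w hvw with rfl | rfl
    · exact Or.inl ⟨rfl, hvw⟩
    · exact Or.inr ⟨hvw.symm, rfl⟩
  · rintro (⟨rfl, h⟩ | ⟨h, rfl⟩)
    exacts [h, h.symm]

lemma isIsolatedPlusCompleteMultipartite_of_triangle {x y z : V}
    (hxy : G.Adj x y) (hxz : G.Adj x z) (hyz : G.Adj y z)
    (hmem : ∀ v w, G.Adj v w → v = x ∨ v = y ∨ v = z) :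
    IsIsolatedPlusCompleteMultipartite G := by
  refine ⟨{x}, {y}, {z}, by simpa using hxy.ne, by simpa using hxz.ne, by simpa using hyz.ne,
    fun v w => ?_⟩
  simp only [Set.mem_singleton_iff]
  constructor
  · intro hvw
    have hne := hvw.ne
    rcases hmem v w hvw with rfl | rfl | rfl <;>
      rcases hmem w v hvw.symm with rfl | rfl | rfl <;> tauto
  · rintro (⟨rfl, rfl⟩ | ⟨rfl, rfl⟩ | ⟨rfl, rfl⟩ | ⟨rfl, rfl⟩ | ⟨rfl, rfl⟩ | ⟨rfl, rfl⟩)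
    exacts [hxy, hxy.symm, hxz, hxz.symm, hyz, hyz.symm]

lemma adj_imp_mem_triangle (h2K2 : ¬ GraphContains G twoK2) (hpaw : ¬ GraphContains G pawGraph)
    {x y z : V} (hxy : G.Adj x y) (hxz : G.Adj x z) (hyz : G.Adj y z)
    {v w : V} (hvw : G.Adj v w) : v = x ∨ v = y ∨ v = z := by
  by_contra! hv
  obtain ⟨hvx, hvy, hvz⟩ := hv
  by_cases hw : w = x ∨ w = y ∨ w = z
  · rcases hw with rfl | rfl | rfl
    · exact hpaw (graphContains_pawGraph hxy.symm hyz hxz hvw.symm hvy.symm hvz.symm)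
    · exact hpaw (graphContains_pawGraph hxy hxz hyz hvw.symm hvx.symm hvz.symm)
    · exact hpaw (graphContains_pawGraph hxz hxy hyz.symm hvw.symm hvx.symm hvy.symm)
  · obtain ⟨hwx, hwy, -⟩ : w ≠ x ∧ w ≠ y ∧ w ≠ z := by tauto
    exact h2K2 (graphContains_twoK2 hxy hvw hvx.symm hwx.symm hvy.symm hwy.symm)

lemma exists_adj_ne_of_adj_avoiding (h2K2 : ¬ GraphContains G twoK2) {x y a b : V}
    (hxy : G.Adj x y) (hab : G.Adj a b) (hax : a ≠ x) (hbx : b ≠ x) :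
    ∃ u, G.Adj y u ∧ u ≠ x := by
  by_cases hay : a = y
  · exact ⟨b, hay ▸ hab, hbx⟩
  by_cases hby : b = y
  · exact ⟨a, (hby ▸ hab).symm, hax⟩
  exact (h2K2 (graphContains_twoK2 hxy hab hax.symm hbx.symm (Ne.symm hay) (Ne.symm hby))).elim

lemma forall_adj_eq_or_eq_of_not_exists_common_adj (h2K2 : ¬ GraphContains G twoK2)
    (hP4 : ¬ GraphContains G (SimpleGraph.pathGraph 4)) {x y : V} (hxy : G.Adj x y)
    (hz : ¬ ∃ z, G.Adj x z ∧ G.Adj y z) :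
    (∀ v w, G.Adj v w → v = x ∨ w = x) ∨ (∀ v w, G.Adj v w → v = y ∨ w = y) := by
  by_contra! h
  obtain ⟨⟨a, b, hab, hax, hbx⟩, ⟨c, d, hcd, hcy, hdy⟩⟩ := h
  obtain ⟨u, hyu, hux⟩ := exists_adj_ne_of_adj_avoiding h2K2 hxy hab hax hbx
  obtain ⟨t, hxt, hty⟩ := exists_adj_ne_of_adj_avoiding h2K2 hxy.symm hcd hcy hdy
  have htu : t ≠ u := by
    rintro rfl
    exact hz ⟨t, hxt, hyu⟩
  exact hP4 (graphContains_pathGraph_four hxt.symm hxy hyu hty htu hux.symm)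

end Structure

theorem no_forbidden_subgraphs_multipartite_general {V : Type*} (G : SimpleGraph V)
    (h1 : ¬ GraphContains G twoK2)
    (h3 : ¬ GraphContains G (SimpleGraph.pathGraph 4))
    (h4 : ¬ GraphContains G pawGraph) :
    IsIsolatedPlusCompleteMultipartite G := by
  by_cases hE : ∃ x y, G.Adj x y
  case neg =>
    exact isIsolatedPlusCompleteMultipartite_of_forall_not_adj fun v w h => hE ⟨v, w, h⟩
  obtain ⟨x, y, hxy⟩ := hE
  by_cases hz : ∃ z, G.Adj x z ∧ G.Adj y z
  · obtain ⟨z, hxz, hyz⟩ := hz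
    exact isIsolatedPlusCompleteMultipartite_of_triangle hxy hxz hyz
      fun _ _ hvw => adj_imp_mem_triangle h1 h4 hxy hxz hyz hvw
  · rcases forall_adj_eq_or_eq_of_not_exists_common_adj h1 h3 hxy hz with hx | hy
    · exact isIsolatedPlusCompleteMultipartite_of_forall_adj_eq_or_eq x hx
    · exact isIsolatedPlusCompleteMultipartite_of_forall_adj_eq_or_eq y hy

/-- Let `G` be a finite simple graph containing none of `2K2`, `K₄`, `P₄` (the path on four
vertices) and the paw as subgraphs. Then `G` is a disjoint union of a (possibly empty) set
of isolated vertices and a complete bipartite or complete tripartite graph. -/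
theorem no_forbidden_subgraphs_multipartite {V : Type*} [Fintype V] (G : SimpleGraph V)
    (h1 : ¬ GraphContains G twoK2)
    (h2 : ¬ GraphContains G (SimpleGraph.completeGraph (Fin 4)))
    (h3 : ¬ GraphContains G (SimpleGraph.pathGraph 4))
    (h4 : ¬ GraphContains G pawGraph) :
    IsIsolatedPlusCompleteMultipartite G :=
  no_forbidden_subgraphs_multipartite_general G h1 h3 h4
end
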